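/- arXiv:2208.00260 — 3 statements merged into one kernel-verified Lean document; each statement's English description precedes it below -/
import Mathlib

section
/- For r = 4, the rational number s defined by binom(i+1,2)·s + (i+1) = binom(4+i, i) is an integer if and only if i is congruent to 1, 2, 5, or 10 modulo 12. -/
/-!
Since `binom(i+1,2) = i(i+1)/2` and `binom(4+i,i) = (i+1)(i+2)(i+3)(i+4)/24`, the defining
equation gives `s = ((i+2)(i+3)(i+4) - 24) / (12 i) = (i² + 9i + 26) / 12`, and the residues
`n` modulo 12 with `12 ∣ n² + 9n + 26` are exactly 1, 2, 5 and 10.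
-/

theorem Nat.add_one_choose_two_mul_two (n : ℕ) : (n + 1).choose 2 * 2 = (n + 1) * n := by
  simpa using (Nat.add_one_mul_choose_eq n 1).symm

theorem Nat.four_add_choose_mul_twentyFour (n : ℕ) :
    (4 + n).choose n * 24 = (n + 1) * (n + 2) * (n + 3) * (n + 4) := by
  rw [add_comm, Nat.choose_symm_add, mul_comm, show 24 = Nat.factorial 4 from rfl,
    ← Nat.ascFactorial_eq_factorial_mul_choose]
  simp only [Nat.ascFactorial_succ, Nat.ascFactorial_zero]
  ring

theorem exists_mul_eq_iff_dvd_of_mul_eq {R : Type*} [CommRing R] [IsDomain R] {a b d m : R}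
    (ha : a ≠ 0) (hd : d ≠ 0) (h : a * m = d * b) : (∃ s, a * s = b) ↔ d ∣ m := by
  constructor
  · rintro ⟨s, rfl⟩
    exact ⟨s, mul_left_cancel₀ ha (by rw [h]; ring)⟩
  · rintro ⟨k, rfl⟩
    exact ⟨k, mul_left_cancel₀ hd (by rw [← h]; ring)⟩

theorem Nat.twelve_dvd_sq_add_nine_mul_add_twentySix_iff (n : ℕ) :
    12 ∣ n ^ 2 + 9 * n + 26 ↔ n % 12 = 1 ∨ n % 12 = 2 ∨ n % 12 = 5 ∨ n % 12 = 10 := by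
  have h := Nat.mod_lt n (show 12 > 0 by norm_num)
  rw [Nat.dvd_iff_mod_eq_zero, Nat.add_mod, Nat.add_mod (n ^ 2), Nat.pow_mod, Nat.mul_mod]
  interval_cases n % 12 <;> simp

/-- For `r = 4`, the rational number `s` defined by
`binom(i+1,2) s + (i+1) = binom(4+i,i)` is an integer if and only if
`i ≡ 1, 2, 5, 10 (mod 12)`. -/
theorem stmt_2 (i : ℕ) (hi : 1 ≤ i) :
    (∃ s : ℤ, ((i + 1).choose 2 : ℤ) * s + (i + 1) = ((4 + i).choose i : ℤ)) ↔
      (i % 12 = 1 ∨ i % 12 = 2 ∨ i % 12 = 5 ∨ i % 12 = 10) := by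
  have hT : ((i + 1).choose 2 : ℤ) * 2 = (i + 1) * i := by
    exact_mod_cast Nat.add_one_choose_two_mul_two i
  have hC : ((4 + i).choose i : ℤ) * 24 = (i + 1) * (i + 2) * (i + 3) * (i + 4) := by
    exact_mod_cast Nat.four_add_choose_mul_twentyFour i
  have hT0 : ((i + 1).choose 2 : ℤ) ≠ 0 := by
    exact_mod_cast (Nat.choose_pos (by omega)).ne'
  have key : ((i + 1).choose 2 : ℤ) * ((i : ℤ) ^ 2 + 9 * i + 26)
      = 12 * ((4 + i).choose i - (i + 1)) := by
    refine mul_left_cancel₀ (two_ne_zero (α := ℤ)) ?_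
    linear_combination ((i : ℤ) ^ 2 + 9 * i + 26) * hT - hC
  simp only [← eq_sub_iff_add_eq]
  rw [exists_mul_eq_iff_dvd_of_mul_eq hT0 (by norm_num) key,
    ← Nat.twelve_dvd_sq_add_nine_mul_add_twentySix_iff]
  exact_mod_cast Int.natCast_dvd_natCast
end

section
/- For r = 5, the rational number s defined by binom(i+1,2)·s + (i+1) = binom(5+i, i) is an integer if and only if i is congruent to one of 1, 2, 7, 11, 13, 17, 22, 23, 26, 31, 37, 38, 41, 43, 46, 47, 53, 58 modulo 60. -/
/-!
Since `binom(i+1,2) = i(i+1)/2` and `120 binom(i+5,5) = (i+1)(i+2)(i+3)(i+4)(i+5)`, and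
`(i+2)(i+3)(i+4)(i+5) - 120 = i (i^3 + 14 i^2 + 71 i + 154)`, the number `s` equals
`(i^3 + 14 i^2 + 71 i + 154) / 60` once `i ≥ 1`. Its integrality depends only on `i mod 60`,
and the admissible residues are found by checking all sixty of them.
-/

lemma choose_succ_two_mul_two (i : ℕ) : ((i + 1).choose 2 : ℤ) * 2 = (i + 1) * i := by
  have h := Nat.add_one_mul_choose_eq i 1
  rw [Nat.choose_one_right] at h
  exact_mod_cast h.symm

lemma choose_five_add_mul_120 (i : ℕ) :
    ((5 + i).choose i : ℤ) * 120 = (i + 1) * (i + 2) * (i + 3) * (i + 4) * (i + 5) := by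
  have h := Nat.ascFactorial_eq_factorial_mul_choose i 5
  simp only [Nat.ascFactorial_succ, Nat.ascFactorial_zero, Nat.factorial] at h
  rw [add_comm 5 i, Nat.choose_symm_add]
  have h' := congrArg (Nat.cast (R := ℤ)) h
  push_cast at h'
  linear_combination -h'

lemma exists_mul_add_eq_iff_dvd_sub {R : Type*} [CommRing R] (a b c : R) :
    (∃ s, a * s + b = c) ↔ a ∣ c - b := by
  simp only [Dvd.dvd, eq_sub_iff_add_eq, eq_comm]

lemma exists_choose_eq_iff_sixty_dvd (i : ℕ) (hi : 1 ≤ i) :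
    (∃ s : ℤ, ((i + 1).choose 2 : ℤ) * s + (i + 1) = ((5 + i).choose i : ℤ)) ↔
      (60 : ℤ) ∣ i ^ 3 + 14 * i ^ 2 + 71 * i + 154 := by
  have h2 := choose_succ_two_mul_two i
  have h5 := choose_five_add_mul_120 i
  have hi' : ((i + 1) * i : ℤ) ≠ 0 := by positivity
  rw [exists_mul_add_eq_iff_dvd_sub]
  calc ((i + 1).choose 2 : ℤ) ∣ (5 + i).choose i - (i + 1)
      ↔ ((i + 1).choose 2 : ℤ) * 120 ∣ ((5 + i).choose i - (i + 1)) * 120 :=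
        (mul_dvd_mul_iff_right (by norm_num)).symm
    _ ↔ ((i : ℤ) + 1) * i * 60 ∣ ((i : ℤ) + 1) * i * (i ^ 3 + 14 * i ^ 2 + 71 * i + 154) := by
        rw [show ((i + 1).choose 2 : ℤ) * 120 = ((i : ℤ) + 1) * i * 60 by
            linear_combination 60 * h2,
          show ((5 + i).choose i - (i + 1) : ℤ) * 120
              = ((i : ℤ) + 1) * i * (i ^ 3 + 14 * i ^ 2 + 71 * i + 154) by
            linear_combination h5]
    _ ↔ _ := mul_dvd_mul_iff_left hi'

lemma sixty_dvd_iff_mod (i : ℕ) :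
    (60 : ℤ) ∣ i ^ 3 + 14 * i ^ 2 + 71 * i + 154 ↔
      (i % 60 = 1 ∨ i % 60 = 2 ∨ i % 60 = 7 ∨ i % 60 = 11 ∨ i % 60 = 13 ∨
       i % 60 = 17 ∨ i % 60 = 22 ∨ i % 60 = 23 ∨ i % 60 = 26 ∨ i % 60 = 31 ∨
       i % 60 = 37 ∨ i % 60 = 38 ∨ i % 60 = 41 ∨ i % 60 = 43 ∨ i % 60 = 46 ∨
       i % 60 = 47 ∨ i % 60 = 53 ∨ i % 60 = 58) := by
  refine (ZMod.intCast_zmod_eq_zero_iff_dvd _ 60).symm.trans ?_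
  push_cast
  rw [← ZMod.natCast_mod i 60]
  have := Nat.mod_lt i (show 60 > 0 by norm_num)
  generalize i % 60 = r at *
  interval_cases r <;> decide

/-- For `r = 5`, the rational number `s` defined by
`binom(i+1,2) s + (i+1) = binom(5+i,i)` is an integer if and only if
`i ≡ 1, 2, 7, 11, 13, 17, 22, 23, 26, 31, 37, 38, 41, 43, 46, 47, 53, 58 (mod 60)`. -/
theorem stmt_3 (i : ℕ) (hi : 1 ≤ i) :
    (∃ s : ℤ, ((i + 1).choose 2 : ℤ) * s + (i + 1) = ((5 + i).choose i : ℤ)) ↔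
      (i % 60 = 1 ∨ i % 60 = 2 ∨ i % 60 = 7 ∨ i % 60 = 11 ∨ i % 60 = 13 ∨
       i % 60 = 17 ∨ i % 60 = 22 ∨ i % 60 = 23 ∨ i % 60 = 26 ∨ i % 60 = 31 ∨
       i % 60 = 37 ∨ i % 60 = 38 ∨ i % 60 = 41 ∨ i % 60 = 43 ∨ i % 60 = 46 ∨
       i % 60 = 47 ∨ i % 60 = 53 ∨ i % 60 = 58) := by
  rw [exists_choose_eq_iff_sixty_dvd i hi, sixty_dvd_iff_mod]
end

section
/- Let r ≥ 4 and i ≥ 2 be integers and let s be an integer with binom(i+1,2)·s + (i+1) = binom(r+i, i). Then i + binom(i,2)·s − binom(r+i−1, i−1) ≥ 0. -/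
/-! With `B = binom(r+i-1, i-1)`, eliminating `s` by
`binom(i,2) (i+1) = binom(i+1,2) (i-1)` and `i binom(r+i,i) = (r+i) B` gives
`i (i+1) (i + binom(i,2) s - B) = i (i+1) + ((i-1) r - 2i) B`,
and `(i-1) r ≥ 2i` as soon as `r ≥ 4` and `i ≥ 2`. -/

lemma Nat.choose_two_mul_eq (k : ℕ) : (k + 2).choose 2 * k = (k + 1).choose 2 * (k + 2) := by
  simpa using (Nat.choose_mul_succ_eq (k + 1) 2).symm

lemma mul_add_choose_two_mul_sub_choose_eq (r k : ℕ) (s : ℤ)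
    (hs : ((k + 2).choose 2 : ℤ) * s + (k + 2) = ((r + k + 1).choose (k + 1) : ℤ)) :
    ((k + 1) * (k + 2) : ℤ) * ((k + 1) + ((k + 1).choose 2 : ℤ) * s - ((r + k).choose k : ℤ))
      = (k + 1) * (k + 2) + (k * r - 2 * (k + 1)) * ((r + k).choose k : ℤ) := by
  have hc : ((k + 2).choose 2 : ℤ) * k = ((k + 1).choose 2 : ℤ) * (k + 2) := by
    exact_mod_cast Nat.choose_two_mul_eq k
  have hC : ((r + k + 1 : ℕ) : ℤ) * ((r + k).choose k : ℤ)
      = ((r + k + 1).choose (k + 1) : ℤ) * (k + 1) := by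
    exact_mod_cast Nat.add_one_mul_choose_eq (r + k) k
  push_cast at hC
  linear_combination -(k + 1) * s * hc + (k + 1) * k * hs - k * hC

theorem stmt_10_general (r i : ℕ) (hr : 4 ≤ r) (hi : 2 ≤ i) (s : ℤ)
    (hs : ((i + 1).choose 2 : ℤ) * s + (i + 1) = ((r + i).choose i : ℤ)) :
    0 ≤ (i : ℤ) + ((i.choose 2 : ℤ)) * s - ((r + i - 1).choose (i - 1) : ℤ) := by
  obtain ⟨k, rfl⟩ : ∃ k, i = k + 1 := ⟨i - 1, by omega⟩
  simp only [Nat.add_sub_cancel, ← add_assoc] at hs ⊢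
  push_cast at hs ⊢
  have hcoef : (0 : ℤ) ≤ k * r - 2 * (k + 1) := by
    have hk : (1 : ℤ) ≤ k := by omega
    have hr' : (4 : ℤ) ≤ r := by omega
    nlinarith
  have hpos : (0 : ℤ) < (k + 1) * (k + 2) := by positivity
  have key := mul_add_choose_two_mul_sub_choose_eq r k s (by linear_combination hs)
  refine nonneg_of_mul_nonneg_right (a := ((k + 1) * (k + 2) : ℤ)) ?_ hpos
  rw [key]
  positivity

/-- If `binom(i+1,2) s + (i+1) = binom(r+i,i)` then
`i + binom(i,2) s - binom(r+i-1,i-1) ≥ 0`. -/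
theorem stmt_10 (r i : ℕ) (hr : 4 ≤ r) (hi : 2 ≤ i) (hri : r = 4 → 3 ≤ i) (s : ℤ)
    (hs : ((i + 1).choose 2 : ℤ) * s + (i + 1) = ((r + i).choose i : ℤ)) :
    0 ≤ (i : ℤ) + ((i.choose 2 : ℤ)) * s - ((r + i - 1).choose (i - 1) : ℤ) :=
  stmt_10_general r i hr hi s hs
end
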